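/- arXiv:2406.20019 — 3 statements merged into one kernel-verified Lean document; each statement's English description precedes it below -/
import Mathlib

section
/- Let a, b, λ, P be real numbers with |b| ≤ |a|, |λ| < 1, and P ≥ 0. Then ψ(((a² + b² − 2λab)/(1 − λ²))·P) − ψ(a²·P) ≤ (1/2)·log₂(2/(1 − |λ|)), where ψ(x) = (1/2)·log₂(1+x). -/
noncomputable def psi (x : ℝ) : ℝ := (1/2) * Real.logb 2 (1 + x)

/-! The outer-bound gain `(a² + b² - 2λab)/(1 - λ²)` is at most `2/(1 - |λ|)` times the gain `a²`
of the stronger receiver, since `1 - λ² = (1 - |λ|)(1 + |λ|)` and, for `|b| ≤ |a|`, the numerator is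
at most `2(1 + |λ|)a²`. A multiplicative factor `c ≥ 1` between the SNRs costs at most
`½ log₂ c` in `ψ`, because `1 + c y ≤ c (1 + y)`. -/

open Real

theorem psi_sub_psi_le_of_le_mul {x y c : ℝ} (hx : -1 < x) (hy : 0 ≤ y) (hc : 1 ≤ c)
    (hxy : x ≤ c * y) : psi x - psi y ≤ 1/2 * logb 2 c := by
  have hy1 : 0 < 1 + y := by linarith
  have hratio : (1 + x) / (1 + y) ≤ c := by
    rw [div_le_iff₀ hy1]; nlinarith
  unfold psi
  rw [← mul_sub, ← logb_div (by linarith) hy1.ne']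
  have hlog := logb_le_logb_of_le one_lt_two (div_pos (by linarith) hy1) hratio
  exact mul_le_mul_of_nonneg_left hlog (by norm_num)

section GainBound

variable {a b l : ℝ}

theorem sq_add_sq_sub_two_mul_mul_mul_le (hb : |b| ≤ |a|) :
    a^2 + b^2 - 2 * l * a * b ≤ 2 * (1 + |l|) * a^2 := by
  have hba : b^2 ≤ a^2 := sq_le_sq.mpr hb
  have hcross : -(l * a * b) ≤ |l| * a^2 :=
    calc -(l * a * b) ≤ |l * a * b| := neg_le_abs _
      _ = |l| * (|a| * |b|) := by rw [abs_mul, abs_mul, mul_assoc]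
      _ ≤ |l| * a^2 := by
        gcongr; rw [← sq_abs a, sq]; exact mul_le_mul_of_nonneg_left hb (abs_nonneg a)
  linarith

theorem sq_add_sq_sub_two_mul_mul_mul_nonneg (hl : |l| ≤ 1) :
    0 ≤ a^2 + b^2 - 2 * l * a * b := by
  obtain ⟨hl₁, hl₂⟩ := abs_le.mp hl
  nlinarith [sq_nonneg (a - b), sq_nonneg (a + b)]

theorem sq_add_sq_sub_two_mul_mul_mul_div_le (hb : |b| ≤ |a|) (hl : |l| < 1) :
    (a^2 + b^2 - 2 * l * a * b) / (1 - l^2) ≤ 2 / (1 - |l|) * a^2 := by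
  have h₁ : 0 < 1 - |l| := by linarith
  have h₂ : 0 < 1 + |l| := by linarith [abs_nonneg l]
  have hfactor : 1 - l^2 = (1 - |l|) * (1 + |l|) := by rw [← sq_abs l]; ring
  rw [hfactor, div_le_iff₀ (mul_pos h₁ h₂)]
  calc a^2 + b^2 - 2 * l * a * b ≤ 2 * (1 + |l|) * a^2 := sq_add_sq_sub_two_mul_mul_mul_le hb
    _ = 2 / (1 - |l|) * a^2 * ((1 - |l|) * (1 + |l|)) := by field_simp

end GainBound

theorem df_gap (a b l P : ℝ) (hb : |b| ≤ |a|) (hl : |l| < 1) (hP : 0 ≤ P) :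
    psi (((a^2 + b^2 - 2 * l * a * b) / (1 - l^2)) * P) - psi (a^2 * P)
      ≤ (1/2) * Real.logb 2 (2 / (1 - |l|)) := by
  have hl₁ : 0 < 1 - |l| := by linarith
  have hl₂ : 0 < 1 - l^2 := by nlinarith [sq_abs l, abs_nonneg l]
  have hgain_nonneg : 0 ≤ (a^2 + b^2 - 2 * l * a * b) / (1 - l^2) :=
    div_nonneg (sq_add_sq_sub_two_mul_mul_mul_nonneg hl.le) hl₂.le
  have hfactor : 1 ≤ 2 / (1 - |l|) := by
    rw [le_div_iff₀ hl₁]; linarith [abs_nonneg l]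
  apply psi_sub_psi_le_of_le_mul (by nlinarith) (by positivity) hfactor
  rw [← mul_assoc]
  exact mul_le_mul_of_nonneg_right (sq_add_sq_sub_two_mul_mul_mul_div_le hb hl) hP
end

section
/- Let P > 0 and C₁₂, C₂₁ ≥ 0, and let ψ(x) = (1/2)·log₂(1+x). Define for each β ∈ [0,1] the set S(β) = {(R₀,R₁) ∈ ℝ≥0² : R₀ ≤ ψ((1−β)P/(βP+1)) + C₁₂, R₀+R₁ ≤ ψ(P) + C₂₁, R₀+R₁ ≤ ψ(βP) + ψ((1−β)P/(βP+1)) + C₁₂ + C₂₁}. Then ⋃_{β∈[0,1]} S(β) = {(R₀,R₁) ∈ ℝ≥0² : R₀ ≤ ψ(P) + C₁₂, R₀+R₁ ≤ ψ(P) + C₂₁}. -/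
lemma psi_le_psi {x y : ℝ} (hx : -1 < x) (hxy : x ≤ y) : psi x ≤ psi y := by
  unfold psi
  gcongr
  · norm_num
  · linarith

lemma psi_zero : psi 0 = 0 := by
  simp [psi]

lemma one_sub_mul_div_mul_add_one_le {β P : ℝ} (hβ0 : 0 ≤ β) (hβ1 : β ≤ 1) (hP : 0 ≤ P) :
    (1 - β) * P / (β * P + 1) ≤ P :=
  calc (1 - β) * P / (β * P + 1) ≤ (1 - β) * P :=
        div_le_self (by nlinarith) (by nlinarith)
    _ ≤ P := by nlinarith

theorem capacity_region_union_general (P C12 C21 : ℝ) (hP : 0 < P) (h12 : 0 ≤ C12) :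
    (⋃ β ∈ Set.Icc (0:ℝ) 1,
        {p : ℝ × ℝ | 0 ≤ p.1 ∧ 0 ≤ p.2 ∧
          p.1 ≤ psi ((1 - β) * P / (β * P + 1)) + C12 ∧
          p.1 + p.2 ≤ psi P + C21 ∧
          p.1 + p.2 ≤ psi (β * P) + psi ((1 - β) * P / (β * P + 1)) + C12 + C21})
      = {p : ℝ × ℝ | 0 ≤ p.1 ∧ 0 ≤ p.2 ∧ p.1 ≤ psi P + C12 ∧ p.1 + p.2 ≤ psi P + C21} := by
  ext p
  simp only [Set.mem_iUnion, Set.mem_ofPred_eq, Set.mem_Icc, exists_prop]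
  constructor
  · rintro ⟨β, ⟨hβ0, hβ1⟩, hp1, hp2, hR0, hsum, -⟩
    have hsnr : 0 ≤ (1 - β) * P / (β * P + 1) := by
      have hβP := mul_nonneg hβ0 hP.le
      exact div_nonneg (by nlinarith) (by linarith)
    have hψ := psi_le_psi (by linarith) (one_sub_mul_div_mul_add_one_le hβ0 hβ1 hP.le)
    exact ⟨hp1, hp2, by linarith, hsum⟩
  · rintro ⟨hp1, hp2, hR0, hsum⟩
    -- at β = 0 the third bound is the second one relaxed by C12 ≥ 0
    refine ⟨0, ⟨le_rfl, zero_le_one⟩, hp1, hp2, ?_, hsum, ?_⟩ <;>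
      simp only [sub_zero, one_mul, zero_mul, zero_add, div_one, psi_zero] <;> linarith

theorem capacity_region_union (P C12 C21 : ℝ) (hP : 0 < P) (h12 : 0 ≤ C12) (h21 : 0 ≤ C21) :
    (⋃ β ∈ Set.Icc (0:ℝ) 1,
        {p : ℝ × ℝ | 0 ≤ p.1 ∧ 0 ≤ p.2 ∧
          p.1 ≤ psi ((1 - β) * P / (β * P + 1)) + C12 ∧
          p.1 + p.2 ≤ psi P + C21 ∧
          p.1 + p.2 ≤ psi (β * P) + psi ((1 - β) * P / (β * P + 1)) + C12 + C21})
      = {p : ℝ × ℝ | 0 ≤ p.1 ∧ 0 ≤ p.2 ∧ p.1 ≤ psi P + C12 ∧ p.1 + p.2 ≤ psi P + C21} :=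
  capacity_region_union_general P C12 C21 hP h12
end

section
/- Let a, λ, P be real numbers with |λ| < 1 and P ≥ 0, and let μ = a² + b² − 2λab for some real b. Then ψ((μ + (1−λ²)·a²)·P/(2(1−λ²))) ≥ ψ(μ·P/(1−λ²)) − 1/2, where ψ(x) = (1/2)·log₂(1+x) and assuming μ ≥ 0. -/
theorem psi_le_psi_add_half {x y : ℝ} (hy : 0 < 1 + y) (h : 1 + y ≤ 2 * (1 + x)) :
    psi y ≤ psi x + 1 / 2 := by
  have hx : 0 < 1 + x := by linarith
  have hlog : Real.logb 2 (1 + y) ≤ Real.logb 2 (1 + x) + 1 :=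
    calc Real.logb 2 (1 + y) ≤ Real.logb 2 (2 * (1 + x)) :=
          Real.logb_le_logb_of_le one_lt_two hy h
      _ = Real.logb 2 (1 + x) + 1 := by
          rw [Real.logb_mul two_ne_zero hx.ne', Real.logb_self_eq_one one_lt_two, add_comm]
  unfold psi
  linarith

theorem one_add_div_le_two_mul_one_add_div (μ a P : ℝ) {s : ℝ} (hs : s ≠ 0) (hP : 0 ≤ P) :
    1 + μ * P / s ≤ 2 * (1 + (μ + s * a ^ 2) * P / (2 * s)) := by
  have h : 2 * (1 + (μ + s * a ^ 2) * P / (2 * s)) = (1 + μ * P / s) + (1 + a ^ 2 * P) := by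
    field_simp
    ring
  rw [h]
  exact le_add_of_nonneg_right (by positivity)

theorem half_bit_gap_general (a l P : ℝ) (hl : |l| < 1) (hP : 0 ≤ P)
    (μ : ℝ) (hμ0 : 0 ≤ μ) :
    psi ((μ + (1 - l^2) * a^2) * P / (2 * (1 - l^2))) ≥ psi (μ * P / (1 - l^2)) - 1/2 := by
  have hs : 0 < 1 - l ^ 2 := sub_pos.mpr ((sq_lt_one_iff_abs_lt_one l).mpr hl)
  have hy : 0 < 1 + μ * P / (1 - l ^ 2) := by positivity
  have := psi_le_psi_add_half hy (one_add_div_le_two_mul_one_add_div μ a P hs.ne' hP)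
  linarith

theorem half_bit_gap (a b l P : ℝ) (hl : |l| < 1) (hP : 0 ≤ P)
    (μ : ℝ) (hμ : μ = a^2 + b^2 - 2 * l * a * b) (hμ0 : 0 ≤ μ) :
    psi ((μ + (1 - l^2) * a^2) * P / (2 * (1 - l^2))) ≥ psi (μ * P / (1 - l^2)) - 1/2 :=
  half_bit_gap_general a l P hl hP μ hμ0
end
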